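/- Let d be a positive integer, let ρ be a quantum state on ℂ^d, and let D(ρ) be the measure on the unit sphere with density v ↦ d·⟨v|ρ|v⟩ with respect to σ_d. Then D(ρ) is a probability measure, and for every Hermitian matrix O ∈ ℂ^{d×d}, Tr(Oρ) = (d+1)·∫ ⟨v|O|v⟩ dD(ρ)(v) − Tr(O). Equivalently, ∫ ⟨v|O|v⟩ dD(ρ)(v) = (Tr(O) + Tr(Oρ))/(d+1). -/

import Mathlib

open Matrix MeasureTheory
open scoped ComplexOrder

noncomputable section

/-- `⟨v|A|v⟩ = v† A v`. -/
def qexp {d : ℕ} (A : Matrix (Fin d) (Fin d) ℂ) (v : Fin d → ℂ) : ℂ :=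
  star v ⬝ᵥ A.mulVec v

/-- Squared ℓ²-norm of a vector of `ℂ^d`. -/
def norm2 {d : ℕ} (v : Fin d → ℂ) : ℝ := ∑ i, Complex.normSq (v i)

/-- `σ` is the uniform (unitarily invariant) probability measure on the unit sphere of `ℂ^d`,
viewed as a measure on `ℂ^d` supported on the sphere. -/
def IsUniformSphere (d : ℕ) (σ : Measure (Fin d → ℂ)) : Prop :=
  IsProbabilityMeasure σ ∧
  σ {v | norm2 v = 1}ᶜ = 0 ∧
  ∀ U : Matrix (Fin d) (Fin d) ℂ, U ∈ Matrix.unitaryGroup (Fin d) ℂ →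
    σ.map (fun v => U.mulVec v) = σ

/-- The outcome distribution `D(ρ)` of the uniform POVM on a state `ρ`:
density `v ↦ d·⟨v|ρ|v⟩` with respect to the uniform sphere measure `σ`. -/
def uniformPOVMDist (d : ℕ) (σ : Measure (Fin d → ℂ))
    (ρ : Matrix (Fin d) (Fin d) ℂ) : Measure (Fin d → ℂ) :=
  σ.withDensity (fun v => ENNReal.ofReal ((d : ℝ) * (qexp ρ v).re))


variable {d : ℕ}

/-- degree-(1,1) monomial -/
def m2 (i j : Fin d) (v : Fin d → ℂ) : ℂ := (starRingEnd ℂ) (v i) * v j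

/-- degree-(2,2) monomial -/
def m4 (i j k l : Fin d) (v : Fin d → ℂ) : ℂ := m2 i j v * m2 k l v

variable {σ : Measure (Fin d → ℂ)}

lemma sphere_mem_ae (hσ : IsUniformSphere d σ) : {v | norm2 v = 1} ∈ ae σ :=
  mem_ae_iff.mpr hσ.2.1

lemma coord_bd {v : Fin d → ℂ} (hv : norm2 v = 1) (i : Fin d) : ‖v i‖ ≤ 1 := by
  have h1 : Complex.normSq (v i) ≤ 1 := by
    rw [← hv]
    exact Finset.single_le_sum (f := fun i => Complex.normSq (v i))
      (fun _ _ => Complex.normSq_nonneg _) (Finset.mem_univ i)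
  have h2 := Complex.sq_norm (v i)
  nlinarith [norm_nonneg (v i)]

lemma m2_cont (i j : Fin d) : Continuous (m2 i j) := by
  unfold m2
  exact (Complex.continuous_conj.comp (continuous_apply i)).mul (continuous_apply j)

lemma m4_cont (i j k l : Fin d) : Continuous (m4 i j k l) :=
  (m2_cont i j).mul (m2_cont k l)

lemma m2_integrable (hσ : IsUniformSphere d σ) (i j : Fin d) : Integrable (m2 i j) σ := by
  haveI := hσ.1
  refine Integrable.mono' (integrable_const 1) (m2_cont i j).aestronglyMeasurable ?_
  filter_upwards [sphere_mem_ae hσ] with v hv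
  simp only [m2, norm_mul, RCLike.norm_conj]
  exact mul_le_one₀ (coord_bd hv i) (norm_nonneg _) (coord_bd hv j)

lemma m4_integrable (hσ : IsUniformSphere d σ) (i j k l : Fin d) : Integrable (m4 i j k l) σ := by
  haveI := hσ.1
  refine Integrable.mono' (integrable_const 1) (m4_cont i j k l).aestronglyMeasurable ?_
  filter_upwards [sphere_mem_ae hσ] with v hv
  simp only [m4, m2, norm_mul, RCLike.norm_conj]
  exact mul_le_one₀ (mul_le_one₀ (coord_bd hv i) (norm_nonneg _) (coord_bd hv j)) (by positivity)
    (mul_le_one₀ (coord_bd hv k) (norm_nonneg _) (coord_bd hv l))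

lemma int_comp_unitary (hσ : IsUniformSphere d σ) {U : Matrix (Fin d) (Fin d) ℂ}
    (hU : U ∈ Matrix.unitaryGroup (Fin d) ℂ) {f : (Fin d → ℂ) → ℂ}
    (hf : AEStronglyMeasurable f σ) :
    ∫ v, f (U.mulVec v) ∂σ = ∫ v, f v ∂σ := by
  have hm : Measurable fun v : Fin d → ℂ => U.mulVec v := by
    apply measurable_pi_lambda
    intro i
    unfold Matrix.mulVec dotProduct
    exact Finset.measurable_sum _ fun j _ => (measurable_pi_apply j).const_mul _
  conv_rhs => rw [← hσ.2.2 U hU]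
  rw [integral_map hm.aemeasurable (by rwa [hσ.2.2 U hU])]


lemma mem_unitary_of (H : Matrix (Fin d) (Fin d) ℂ) (hH : Hᴴ = H)
    (hinv : ∀ v, H.mulVec (H.mulVec v) = v) : H ∈ Matrix.unitaryGroup (Fin d) ℂ := by
  rw [Matrix.mem_unitaryGroup_iff', Matrix.star_eq_conjTranspose, hH]
  ext r s
  have := congrFun (hinv (Pi.single s 1)) r
  rw [Matrix.mulVec_mulVec] at this
  rw [Matrix.mulVec_single] at this
  simp only [Pi.smul_apply, Matrix.col_apply, MulOpposite.op_one, one_smul] at this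
  rw [this]
  simp [Matrix.one_apply, Pi.single_apply, eq_comm]

/-- phase unitary -/
def phaseU (p : Fin d) : Matrix (Fin d) (Fin d) ℂ :=
  Matrix.diagonal (fun q => if q = p then Complex.I else 1)

lemma phaseU_mem (p : Fin d) : phaseU p ∈ Matrix.unitaryGroup (Fin d) ℂ := by
  rw [Matrix.mem_unitaryGroup_iff', Matrix.star_eq_conjTranspose, phaseU,
    Matrix.diagonal_conjTranspose, Matrix.diagonal_mul_diagonal]
  ext r s
  by_cases h : r = s
  · subst h
    by_cases hp : r = p <;> simp [Matrix.diagonal_apply, Matrix.one_apply, hp, Complex.conj_I]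
  · simp [Matrix.diagonal_apply_ne _ h, Matrix.one_apply_ne h]

lemma phaseU_mulVec (p : Fin d) (v : Fin d → ℂ) (r : Fin d) :
    (phaseU p).mulVec v r = (if r = p then Complex.I else 1) * v r := by
  rw [phaseU, Matrix.mulVec_diagonal]

/-- swap unitary -/
def swapU (p q : Fin d) : Matrix (Fin d) (Fin d) ℂ :=
  Matrix.of fun r s => if s = Equiv.swap p q r then 1 else 0

lemma swapU_mulVec (p q : Fin d) (v : Fin d → ℂ) (r : Fin d) :
    (swapU p q).mulVec v r = v (Equiv.swap p q r) := by
  unfold swapU Matrix.mulVec dotProduct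
  simp [Finset.sum_ite_eq']

lemma swapU_mem (p q : Fin d) : swapU p q ∈ Matrix.unitaryGroup (Fin d) ℂ := by
  apply mem_unitary_of
  · ext r s
    simp only [Matrix.conjTranspose_apply, swapU, Matrix.of_apply]
    by_cases h : r = Equiv.swap p q s
    · have h' : s = Equiv.swap p q r := by rw [h, Equiv.swap_apply_self]
      rw [if_pos h, if_pos h']; exact star_one _
    · have h' : ¬ s = Equiv.swap p q r := by
        intro hs; apply h; rw [hs, Equiv.swap_apply_self]
      rw [if_neg h, if_neg h']; exact star_zero _
  · intro v
    funext r
    rw [swapU_mulVec, swapU_mulVec, Equiv.swap_apply_self]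


def hc : ℂ := ((Real.sqrt 2)⁻¹ : ℝ)

lemma hc_conj : (starRingEnd ℂ) hc = hc := Complex.conj_ofReal _

lemma hc_sq : hc * hc = 1/2 := by
  unfold hc
  rw [← Complex.ofReal_mul, ← mul_inv, Real.mul_self_sqrt (by norm_num)]
  norm_num

/-- 2×2 Hadamard rotation in coordinates p q -/
def hadU (p q : Fin d) : Matrix (Fin d) (Fin d) ℂ :=
  Matrix.of fun r s =>
    if r = p then (if s = p then hc else if s = q then hc else 0)
    else if r = q then (if s = p then hc else if s = q then -hc else 0)
    else if s = r then 1 else 0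

lemma hadU_mulVec {p q : Fin d} (hpq : p ≠ q) (v : Fin d → ℂ) (r : Fin d) :
    (hadU p q).mulVec v r =
      if r = p then hc * (v p + v q) else if r = q then hc * (v p - v q) else v r := by
  unfold Matrix.mulVec dotProduct
  by_cases hr : r = p
  · subst hr
    rw [if_pos rfl]
    have h1 : ∀ s : Fin d, hadU r q r s * v s
        = (if s = r then hc * v s else 0) + (if s = q then hc * v s else 0) := by
      intro s
      simp only [hadU, Matrix.of_apply, if_pos rfl]
      by_cases hs : s = r
      · subst hs; simp [hpq, Ne.symm hpq]
      · by_cases hs' : s = q <;> simp [hs, hs', hpq, Ne.symm hpq]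
    rw [Finset.sum_congr rfl fun s _ => h1 s, Finset.sum_add_distrib,
      Finset.sum_ite_eq' Finset.univ r, Finset.sum_ite_eq' Finset.univ q]
    simp [mul_add]
  · rw [if_neg hr]
    by_cases hr' : r = q
    · subst hr'
      rw [if_pos rfl]
      have h1 : ∀ s : Fin d, hadU p r r s * v s
          = (if s = p then hc * v s else 0) + (if s = r then -(hc * v s) else 0) := by
        intro s
        simp only [hadU, Matrix.of_apply]
        by_cases hs : s = p
        · subst hs; simp [hr, hpq, Ne.symm hpq]
        · by_cases hs' : s = r <;> simp [hs, hs', hr] <;> ring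
      rw [Finset.sum_congr rfl fun s _ => h1 s, Finset.sum_add_distrib,
        Finset.sum_ite_eq' Finset.univ p, Finset.sum_ite_eq' Finset.univ r]
      simp only [Finset.mem_univ, if_true]
      ring
    · rw [if_neg hr']
      have h1 : ∀ s : Fin d, hadU p q r s * v s
          = (if s = r then v s else 0) := by
        intro s
        simp only [hadU, Matrix.of_apply, hr, hr', if_false]
        by_cases hs : s = r <;> simp [hs]
      rw [Finset.sum_congr rfl fun s _ => h1 s, Finset.sum_ite_eq' Finset.univ r]
      simp

lemma hadU_herm {p q : Fin d} (hpq : p ≠ q) : (hadU p q)ᴴ = hadU p q := by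
  ext r s
  simp only [Matrix.conjTranspose_apply, hadU, Matrix.of_apply]
  by_cases hrp : r = p <;> by_cases hrq : r = q <;> by_cases hsp : s = p <;>
    by_cases hsq : s = q <;> by_cases hrs : r = s <;>
    simp_all [hc_conj, eq_comm]

lemma mem_unitary_of' (H : Matrix (Fin d) (Fin d) ℂ) (hH : Hᴴ = H)
    (hinv : ∀ v, H.mulVec (H.mulVec v) = v) : H ∈ Matrix.unitaryGroup (Fin d) ℂ := by
  rw [Matrix.mem_unitaryGroup_iff', Matrix.star_eq_conjTranspose, hH]
  ext r s
  have := congrFun (hinv (Pi.single s 1)) r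
  rw [Matrix.mulVec_mulVec] at this
  rw [Matrix.mulVec_single] at this
  simp only [Pi.smul_apply, Matrix.col_apply, MulOpposite.op_one, one_smul] at this
  rw [this]
  simp [Matrix.one_apply, Pi.single_apply, eq_comm]

lemma hadU_mem {p q : Fin d} (hpq : p ≠ q) : hadU p q ∈ Matrix.unitaryGroup (Fin d) ℂ := by
  apply mem_unitary_of' _ (hadU_herm hpq)
  intro v
  funext r
  rw [hadU_mulVec hpq]
  by_cases hrp : r = p
  · subst hrp
    rw [if_pos rfl, hadU_mulVec hpq, hadU_mulVec hpq, if_pos rfl, if_neg (Ne.symm hpq),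
      if_pos rfl]
    have := hc_sq
    ring_nf
    linear_combination (2 * v r) * hc_sq
  · rw [if_neg hrp]
    by_cases hrq : r = q
    · subst hrq
      rw [if_pos rfl, hadU_mulVec hpq, hadU_mulVec hpq, if_pos rfl, if_neg (Ne.symm hpq),
        if_pos rfl]
      linear_combination (2 * v r) * hc_sq
    · rw [if_neg hrq, hadU_mulVec hpq, if_neg hrp, if_neg hrq]

lemma J_phase (hσ : IsUniformSphere d σ) (i j k l p : Fin d)
    (hcnt : ((if i = p then 1 else 0) + (if k = p then 1 else 0) : ℤ)
      ≠ (if j = p then 1 else 0) + (if l = p then 1 else 0)) :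
    ∫ v, m4 i j k l v ∂σ = 0 := by
  set e : Fin d → ℂ := fun q => if q = p then Complex.I else 1 with he
  have h2 : ∀ v, m4 i j k l ((phaseU p).mulVec v)
      = ((starRingEnd ℂ) (e i) * e j * ((starRingEnd ℂ) (e k) * e l)) * m4 i j k l v := by
    intro v
    simp only [m4, m2, phaseU_mulVec, _root_.map_mul, he]
    ring
  have h1 : ∫ v, m4 i j k l ((phaseU p).mulVec v) ∂σ = ∫ v, m4 i j k l v ∂σ :=
    int_comp_unitary hσ (phaseU_mem p) (m4_cont i j k l).aestronglyMeasurable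
  rw [integral_congr_ae (Filter.Eventually.of_forall h2), integral_const_mul] at h1
  set c : ℂ := (starRingEnd ℂ) (e i) * e j * ((starRingEnd ℂ) (e k) * e l) with hcdef
  have hc1 : c ≠ 1 := by
    rw [hcdef, he]
    by_cases hi : i = p <;> by_cases hj : j = p <;> by_cases hk : k = p <;>
      by_cases hl : l = p <;>
      simp only [hi, hj, hk, hl, if_true, if_false, if_pos, if_neg, ite_true, ite_false] at hcnt ⊢ <;>
      first
        | omega
        | (simp [Complex.ext_iff, Complex.conj_I]; try norm_num)
  have hz : (c - 1) * ∫ v, m4 i j k l v ∂σ = 0 := by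
    rw [sub_mul, one_mul, h1, sub_self]
  rcases mul_eq_zero.mp hz with h | h
  · exact (hc1 (sub_eq_zero.mp h)).elim
  · exact h

lemma T_offdiag (hσ : IsUniformSphere d σ) {i j : Fin d} (hij : i ≠ j) :
    ∫ v, m2 i j v ∂σ = 0 := by
  have h2 : ∀ v, m2 i j ((phaseU i).mulVec v) = (-Complex.I) * m2 i j v := by
    intro v
    simp only [m2, phaseU_mulVec, _root_.map_mul, if_pos rfl, if_neg hij.symm]
    simp [Complex.conj_I]
    ring
  have h1 : ∫ v, m2 i j ((phaseU i).mulVec v) ∂σ = ∫ v, m2 i j v ∂σ :=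
    int_comp_unitary hσ (phaseU_mem i) (m2_cont i j).aestronglyMeasurable
  rw [integral_congr_ae (Filter.Eventually.of_forall h2), integral_const_mul] at h1
  have hz : ((-Complex.I) - 1) * ∫ v, m2 i j v ∂σ = 0 := by
    rw [sub_mul, one_mul, h1, sub_self]
  rcases mul_eq_zero.mp hz with h | h
  · exfalso
    have := sub_eq_zero.mp h
    simp [Complex.ext_iff] at this
  · exact h

lemma swap_m2 (hσ : IsUniformSphere d σ) (p q : Fin d) :
    ∫ v, m2 p p v ∂σ = ∫ v, m2 q q v ∂σ := by
  have h1 : ∫ v, m2 q q ((swapU p q).mulVec v) ∂σ = ∫ v, m2 q q v ∂σ :=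
    int_comp_unitary hσ (swapU_mem p q) (m2_cont q q).aestronglyMeasurable
  rw [← h1]
  apply integral_congr_ae
  filter_upwards with v
  simp [m2, swapU_mulVec, Equiv.swap_apply_right]

lemma swap_m4 (hσ : IsUniformSphere d σ) (p q : Fin d) :
    ∫ v, m4 p p p p v ∂σ = ∫ v, m4 q q q q v ∂σ := by
  have h1 : ∫ v, m4 q q q q ((swapU p q).mulVec v) ∂σ = ∫ v, m4 q q q q v ∂σ :=
    int_comp_unitary hσ (swapU_mem p q) (m4_cont q q q q).aestronglyMeasurable
  rw [← h1]
  apply integral_congr_ae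
  filter_upwards with v
  simp [m4, m2, swapU_mulVec, Equiv.swap_apply_right]

lemma J_cross (hσ : IsUniformSphere d σ) {p q : Fin d} (hpq : p ≠ q) :
    ∫ v, m4 p p q q v ∂σ = (1/2 : ℂ) * ∫ v, m4 p p p p v ∂σ := by
  have hqp : q ≠ p := hpq.symm
  set pk : Fin 2 → Fin d := ![p, q] with hpk
  have hpt : ∀ v, m4 p p p p ((hadU p q).mulVec v)
      = (1/4 : ℂ) * ∑ x : Fin 2 × Fin 2 × Fin 2 × Fin 2,
          m4 (pk x.1) (pk x.2.1) (pk x.2.2.1) (pk x.2.2.2) v := by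
    intro v
    simp only [m4, m2, hadU_mulVec hpq, if_pos rfl, if_true, eq_self_iff_true, _root_.map_mul, map_add, hc_conj,
      Fintype.sum_prod_type, Fin.sum_univ_two, hpk, Matrix.cons_val_zero, Matrix.cons_val_one,
      Matrix.head_cons]
    linear_combination ((hc*hc) + 1/2) *
      (((starRingEnd ℂ) (v p) + (starRingEnd ℂ) (v q)) * (v p + v q))^2 * hc_sq
  have h1 : ∫ v, m4 p p p p ((hadU p q).mulVec v) ∂σ = ∫ v, m4 p p p p v ∂σ :=
    int_comp_unitary hσ (hadU_mem hpq) (m4_cont p p p p).aestronglyMeasurable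
  rw [integral_congr_ae (Filter.Eventually.of_forall hpt), integral_const_mul,
    integral_finset_sum _ (fun x _ => m4_integrable hσ _ _ _ _)] at h1
  -- now evaluate the 16 integrals
  have hz : ∀ i j k l : Fin d,
      ((if i = q then 1 else 0) + (if k = q then 1 else 0) : ℤ)
        ≠ (if j = q then 1 else 0) + (if l = q then 1 else 0) →
      ∫ v, m4 i j k l v ∂σ = 0 := fun i j k l h => J_phase hσ i j k l q h
  have e1 : ∫ v, m4 q q p p v ∂σ = ∫ v, m4 p p q q v ∂σ := by
    have : m4 q q p p = m4 p p q q := funext fun v => by simp only [m4, m2]; ring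
    rw [this]
  have e2 : ∫ v, m4 p q q p v ∂σ = ∫ v, m4 p p q q v ∂σ := by
    have : m4 p q q p = m4 p p q q := funext fun v => by simp only [m4, m2]; ring
    rw [this]
  have e3 : ∫ v, m4 q p p q v ∂σ = ∫ v, m4 p p q q v ∂σ := by
    have : m4 q p p q = m4 p p q q := funext fun v => by simp only [m4, m2]; ring
    rw [this]
  have e4 : ∫ v, m4 q q q q v ∂σ = ∫ v, m4 p p p p v ∂σ := (swap_m4 hσ p q).symm
  rw [Fintype.sum_prod_type] at h1
  simp only [Fintype.sum_prod_type, Fin.sum_univ_two, hpk, Matrix.cons_val_zero,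
    Matrix.cons_val_one, Matrix.head_cons] at h1
  rw [hz p p p q (by simp [hpq, hqp]), hz p p q p (by simp [hpq, hqp]),
    hz p q p p (by simp [hpq, hqp]), hz q p p p (by simp [hpq, hqp]),
    hz p q p q (by simp [hpq, hqp]), hz q p q p (by simp [hpq, hqp]),
    hz q q q p (by simp [hpq, hqp]), hz q q p q (by simp [hpq, hqp]),
    hz q p q q (by simp [hpq, hqp]), hz p q q q (by simp [hpq, hqp]),
    e1, e2, e3, e4] at h1
  linear_combination h1

lemma int_one (hσ : IsUniformSphere d σ) : ∫ _v, (1:ℂ) ∂σ = 1 := by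
  haveI := hσ.1
  simp

lemma T_sum (hσ : IsUniformSphere d σ) : ∑ i, ∫ v, m2 i i v ∂σ = 1 := by
  rw [← integral_finset_sum _ (fun i _ => m2_integrable hσ i i)]
  have hae : ∀ᵐ v ∂σ, ∑ i, m2 i i v = (1:ℂ) := by
    filter_upwards [sphere_mem_ae hσ] with v hv
    have h2 : ∑ i, m2 i i v = ((norm2 v : ℝ) : ℂ) := by
      simp only [m2, norm2, Complex.ofReal_sum]
      exact Finset.sum_congr rfl fun i _ => (Complex.normSq_eq_conj_mul_self).symm ▸ rfl
    rw [h2, hv, Complex.ofReal_one]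
  rw [integral_congr_ae hae, int_one hσ]

lemma T_val (hσ : IsUniformSphere d σ) (hd : 0 < d) (i j : Fin d) :
    ∫ v, m2 i j v ∂σ = if i = j then (1/(d:ℂ)) else 0 := by
  by_cases hij : i = j
  · subst hij
    rw [if_pos rfl]
    have hall : ∀ k, ∫ v, m2 k k v ∂σ = ∫ v, m2 i i v ∂σ := fun k => swap_m2 hσ k i
    have hs := T_sum (σ := σ) hσ
    rw [Finset.sum_congr rfl (fun k _ => hall k), Finset.sum_const, Finset.card_univ,
      Fintype.card_fin, nsmul_eq_mul] at hs
    have hd' : (d:ℂ) ≠ 0 := Nat.cast_ne_zero.mpr hd.ne'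
    field_simp at hs ⊢
    linear_combination hs
  · rw [if_neg hij]
    exact T_offdiag hσ hij

lemma J_sum (hσ : IsUniformSphere d σ) :
    ∑ i : Fin d, ∑ k : Fin d, ∫ v, m4 i i k k v ∂σ = 1 := by
  have h1 : ∀ i : Fin d, ∑ k, ∫ v, m4 i i k k v ∂σ = ∫ v, ∑ k, m4 i i k k v ∂σ := fun i =>
    (integral_finset_sum _ fun k _ => m4_integrable hσ i i k k).symm
  rw [Finset.sum_congr rfl fun i _ => h1 i,
    ← integral_finset_sum _ (fun i _ => integrable_finset_sum _ fun k _ => m4_integrable hσ i i k k)]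
  have hae : ∀ᵐ v ∂σ, ∑ i : Fin d, ∑ k : Fin d, m4 i i k k v = (1:ℂ) := by
    filter_upwards [sphere_mem_ae hσ] with v hv
    have h2 : ∑ i : Fin d, ∑ k : Fin d, m4 i i k k v
        = (∑ i, m2 i i v) * (∑ k, m2 k k v) := by
      rw [Finset.sum_mul_sum]
      rfl
    have h3 : ∑ i, m2 i i v = ((norm2 v : ℝ) : ℂ) := by
      simp only [m2, norm2, Complex.ofReal_sum]
      exact Finset.sum_congr rfl fun i _ => (Complex.normSq_eq_conj_mul_self).symm ▸ rfl
    rw [h2, h3, hv, Complex.ofReal_one, one_mul]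
  rw [integral_congr_ae hae, int_one hσ]

lemma J_diag_val (hσ : IsUniformSphere d σ) (hd : 0 < d) (i k : Fin d) :
    ∫ v, m4 i i k k v ∂σ = (if i = k then 2 else 1)/((d:ℂ)*((d:ℂ)+1)) := by
  set z : Fin d := ⟨0, hd⟩
  set a : ℂ := ∫ v, m4 z z z z v ∂σ with ha
  have hda : ∀ i : Fin d, ∫ v, m4 i i i i v ∂σ = a := fun i => swap_m4 hσ i z
  have hval : ∀ i k : Fin d, ∫ v, m4 i i k k v ∂σ = if i = k then a else a/2 := by
    intro i k
    by_cases hik : i = k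
    · subst hik; rw [if_pos rfl]; exact hda i
    · rw [if_neg hik, J_cross hσ hik, hda i]; ring
  have hs := J_sum (σ := σ) hσ
  rw [Finset.sum_congr rfl (fun i _ => Finset.sum_congr rfl (fun k _ => hval i k))] at hs
  have hsum2 : ∀ i : Fin d, ∑ k : Fin d, (if i = k then a else a/2)
      = (d:ℂ) * (a/2) + a/2 := by
    intro i
    have : ∀ k : Fin d, (if i = k then a else a/2) = a/2 + (if i = k then a/2 else 0) := by
      intro k; by_cases h : i = k <;> simp [h] <;> ring
    rw [Finset.sum_congr rfl fun k _ => this k, Finset.sum_add_distrib, Finset.sum_const,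
      Finset.card_univ, Fintype.card_fin, Finset.sum_ite_eq, if_pos (Finset.mem_univ i),
      nsmul_eq_mul]
  rw [Finset.sum_congr rfl (fun i _ => hsum2 i), Finset.sum_const, Finset.card_univ,
    Fintype.card_fin, nsmul_eq_mul] at hs
  have hd' : (d:ℂ) ≠ 0 := Nat.cast_ne_zero.mpr hd.ne'
  have hd1 : (d:ℂ) + 1 ≠ 0 := by
    intro h
    have : ((d:ℝ) + 1 : ℂ) = 0 := by push_cast at h ⊢; exact h
    have := congrArg Complex.re this
    simp at this
    nlinarith [Nat.cast_nonneg (α := ℝ) d]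
  rw [hval i k]
  have haval : a = 2/((d:ℂ)*((d:ℂ)+1)) := by
    field_simp at hs ⊢
    linear_combination hs
  by_cases h : i = k <;> simp [h, haval] <;> field_simp <;> ring

lemma J_val (hσ : IsUniformSphere d σ) (hd : 0 < d) (i j k l : Fin d) :
    ∫ v, m4 i j k l v ∂σ =
      ((if i = j ∧ k = l then 1 else 0) + (if i = l ∧ k = j then 1 else 0)) / ((d:ℂ)*((d:ℂ)+1)) := by
  by_cases h1 : i = j ∧ k = l
  · obtain ⟨hij, hkl⟩ := h1
    subst hij; subst hkl
    rw [J_diag_val hσ hd i k]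
    by_cases hik : i = k <;> simp [hik] <;> norm_num
  · by_cases h2 : i = l ∧ k = j
    · obtain ⟨hil, hkj⟩ := h2
      subst hil; subst hkj
      have hik : i ≠ k := fun h => h1 ⟨h, h.symm⟩
      have hm : m4 i k k i = m4 i i k k := funext fun v => by simp only [m4, m2]; ring
      rw [hm, J_diag_val hσ hd i k]
      simp [hik]
    · have h0 : ∫ v, m4 i j k l v ∂σ = 0 := by
        by_cases hA : ((if i = i then 1 else 0) + (if k = i then 1 else 0) : ℤ)
            ≠ (if j = i then 1 else 0) + (if l = i then 1 else 0)
        · exact J_phase hσ i j k l i hA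
        · by_cases hB : ((if i = k then 1 else 0) + (if k = k then 1 else 0) : ℤ)
              ≠ (if j = k then 1 else 0) + (if l = k then 1 else 0)
          · exact J_phase hσ i j k l k hB
          · exfalso
            push_neg at hA hB
            simp only [if_pos rfl] at hA hB
            by_cases hji : j = i <;> by_cases hli : l = i <;> by_cases hki : k = i <;>
              by_cases hjk : j = k <;> by_cases hlk : l = k <;>
              simp [hji, hli, hki, hjk, hlk] at hA hB h1 h2 <;> simp_all <;> omega
      rw [h0]
      simp [h1, h2]

lemma sum_eval (A B : Matrix (Fin d) (Fin d) ℂ) (c : ℂ) :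
    ∑ i : Fin d, ∑ j : Fin d, ∑ k : Fin d, ∑ l : Fin d,
      A i j * B k l * (((if i = j ∧ k = l then (1:ℂ) else 0) + (if i = l ∧ k = j then 1 else 0)) / c)
      = (A.trace * B.trace + (A * B).trace) / c := by
  have split : ∀ i j k l : Fin d,
      A i j * B k l * (((if i = j ∧ k = l then (1:ℂ) else 0) + (if i = l ∧ k = j then 1 else 0)) / c)
      = (A i j * B k l * (if i = j ∧ k = l then (1:ℂ) else 0)) / c
        + (A i j * B k l * (if i = l ∧ k = j then (1:ℂ) else 0)) / c := by
    intro i j k l; ring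
  simp only [split, Finset.sum_add_distrib, ← Finset.sum_div]
  have S1 : ∑ i : Fin d, ∑ j : Fin d, ∑ k : Fin d, ∑ l : Fin d,
      A i j * B k l * (if i = j ∧ k = l then (1:ℂ) else 0) = A.trace * B.trace := by
    have inner : ∀ i j k : Fin d, ∑ l, A i j * B k l * (if i = j ∧ k = l then (1:ℂ) else 0)
        = if i = j then A i j * B k k else 0 := by
      intro i j k
      by_cases hij : i = j
      · simp only [hij, true_and, if_pos rfl, mul_ite, mul_one, mul_zero]
        rw [Finset.sum_ite_eq]
        simp
      · simp [hij]
    have inner2 : ∀ i j : Fin d, ∑ k, (if i = j then A i j * B k k else 0) = (0:ℂ)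
        ∨ True := fun _ _ => Or.inr trivial
    rw [Finset.sum_congr rfl fun i _ => Finset.sum_congr rfl fun j _ =>
      Finset.sum_congr rfl fun k _ => inner i j k]
    have h3 : ∀ i j : Fin d, ∑ k, (if i = j then A i j * B k k else 0)
        = if i = j then A i j * B.trace else 0 := by
      intro i j
      by_cases hij : i = j <;> simp [hij, Matrix.trace, Matrix.diag, Finset.mul_sum]
    rw [Finset.sum_congr rfl fun i _ => Finset.sum_congr rfl fun j _ => h3 i j]
    have h4 : ∀ i : Fin d, ∑ j, (if i = j then A i j * B.trace else 0) = A i i * B.trace := by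
      intro i
      rw [Finset.sum_ite_eq]
      simp
    rw [Finset.sum_congr rfl fun i _ => h4 i, Matrix.trace, ← Finset.sum_mul]
    rfl
  have S2 : ∑ i : Fin d, ∑ j : Fin d, ∑ k : Fin d, ∑ l : Fin d,
      A i j * B k l * (if i = l ∧ k = j then (1:ℂ) else 0) = (A * B).trace := by
    have inner : ∀ i j k : Fin d, ∑ l, A i j * B k l * (if i = l ∧ k = j then (1:ℂ) else 0)
        = if k = j then A i j * B k i else 0 := by
      intro i j k
      by_cases hkj : k = j
      · simp only [hkj, and_true, if_pos rfl, mul_ite, mul_one, mul_zero]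
        rw [Finset.sum_ite_eq]
        simp
      · simp [hkj]
    rw [Finset.sum_congr rfl fun i _ => Finset.sum_congr rfl fun j _ =>
      Finset.sum_congr rfl fun k _ => inner i j k]
    have h3 : ∀ i j : Fin d, ∑ k, (if k = j then A i j * B k i else 0) = A i j * B j i := by
      intro i j
      rw [Finset.sum_ite_eq']
      simp
    rw [Finset.sum_congr rfl fun i _ => Finset.sum_congr rfl fun j _ => h3 i j]
    rw [Matrix.trace]
    exact (Finset.sum_congr rfl fun i _ => by simp [Matrix.diag, Matrix.mul_apply]).symm
  rw [S1, S2, ← add_div]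

lemma qexp_eq (A : Matrix (Fin d) (Fin d) ℂ) (v : Fin d → ℂ) :
    qexp A v = ∑ i, ∑ j, A i j * m2 i j v := by
  unfold qexp Matrix.mulVec dotProduct m2
  simp only [Pi.star_apply, Complex.star_def, Finset.mul_sum]
  exact Finset.sum_congr rfl fun i _ => Finset.sum_congr rfl fun j _ => by ring

lemma qexp_integrable (hσ : IsUniformSphere d σ) (A : Matrix (Fin d) (Fin d) ℂ) :
    Integrable (fun v => qexp A v) σ := by
  simp only [qexp_eq]
  exact integrable_finset_sum _ fun i _ =>
    integrable_finset_sum _ fun j _ => (m2_integrable hσ i j).const_mul _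

lemma qexp_cont (A : Matrix (Fin d) (Fin d) ℂ) : Continuous (fun v => qexp A v) := by
  have h : (fun v => qexp A v) = fun v => ∑ i, ∑ j, A i j * m2 i j v :=
    funext (qexp_eq A)
  rw [h]
  exact continuous_finset_sum _ fun i _ =>
    continuous_finset_sum _ fun j _ => continuous_const.mul (m2_cont i j)

lemma qexp_conj {A : Matrix (Fin d) (Fin d) ℂ} (hA : A.IsHermitian) (v : Fin d → ℂ) :
    (starRingEnd ℂ) (qexp A v) = qexp A v := by
  conv_lhs => rw [qexp_eq]
  have h1 : ∀ i j : Fin d, (starRingEnd ℂ) (A i j * m2 i j v) = A j i * m2 j i v := by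
    intro i j
    rw [_root_.map_mul]
    have hAij : (starRingEnd ℂ) (A i j) = A j i := by
      conv_rhs => rw [← hA]
      rw [Matrix.conjTranspose_apply, Complex.star_def]
    rw [hAij]
    congr 1
    simp only [m2, _root_.map_mul, Complex.conj_conj]
    ring
  rw [map_sum]
  calc ∑ i, (starRingEnd ℂ) (∑ j, A i j * m2 i j v)
      = ∑ i, ∑ j, A j i * m2 j i v := by
        exact Finset.sum_congr rfl fun i _ => by rw [map_sum]; exact Finset.sum_congr rfl fun j _ => h1 i j
    _ = ∑ j, ∑ i, A j i * m2 j i v := Finset.sum_comm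
    _ = qexp A v := (qexp_eq A v).symm

lemma qexp_re_eq {A : Matrix (Fin d) (Fin d) ℂ} (hA : A.IsHermitian) (v : Fin d → ℂ) :
    ((qexp A v).re : ℂ) = qexp A v :=
  Complex.conj_eq_iff_re.mp (qexp_conj hA v)

lemma qexp_first_moment (hσ : IsUniformSphere d σ) (hd : 0 < d) (A : Matrix (Fin d) (Fin d) ℂ) :
    ∫ v, qexp A v ∂σ = A.trace / (d:ℂ) := by
  have h : ∀ v, qexp A v = ∑ i, ∑ j, A i j * m2 i j v := qexp_eq A
  rw [integral_congr_ae (Filter.Eventually.of_forall h),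
    integral_finset_sum (f := fun i v => ∑ j, A i j * m2 i j v) _ (fun i _ => integrable_finset_sum _ fun j _ => (m2_integrable hσ i j).const_mul _)]
  have h2 : ∀ i : Fin d, ∫ v, ∑ j, A i j * m2 i j v ∂σ = ∑ j, A i j * ∫ v, m2 i j v ∂σ := by
    intro i
    rw [integral_finset_sum _ (fun j _ => (m2_integrable hσ i j).const_mul _)]
    exact Finset.sum_congr rfl fun j _ => integral_const_mul _ _
  rw [Finset.sum_congr rfl fun i _ => h2 i]
  simp only [T_val hσ hd, mul_ite, mul_zero, Finset.sum_ite_eq, Finset.mem_univ, if_true]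
  rw [Matrix.trace]
  simp only [Matrix.diag]
  rw [Finset.sum_div]
  exact Finset.sum_congr rfl fun i _ => by ring

lemma qexp_second_moment (hσ : IsUniformSphere d σ) (hd : 0 < d)
    (A B : Matrix (Fin d) (Fin d) ℂ) :
    ∫ v, qexp A v * qexp B v ∂σ = (A.trace * B.trace + (A * B).trace) / ((d:ℂ)*((d:ℂ)+1)) := by
  have I1 : ∀ i j k l : Fin d, Integrable (fun v => A i j * B k l * m4 i j k l v) σ :=
    fun i j k l => (m4_integrable hσ i j k l).const_mul _
  have I2 : ∀ i j k : Fin d, Integrable (fun v => ∑ l, A i j * B k l * m4 i j k l v) σ :=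
    fun i j k => integrable_finset_sum _ fun l _ => I1 i j k l
  have I3 : ∀ i j : Fin d, Integrable (fun v => ∑ k, ∑ l, A i j * B k l * m4 i j k l v) σ :=
    fun i j => integrable_finset_sum _ fun k _ => I2 i j k
  have I4 : ∀ i : Fin d, Integrable (fun v => ∑ j, ∑ k, ∑ l, A i j * B k l * m4 i j k l v) σ :=
    fun i => integrable_finset_sum _ fun j _ => I3 i j
  have hpt : ∀ v, qexp A v * qexp B v = ∑ i, ∑ j, ∑ k, ∑ l, A i j * B k l * m4 i j k l v := by
    intro v
    rw [qexp_eq A, qexp_eq B, Finset.sum_mul_sum]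
    refine Finset.sum_congr rfl fun i _ => ?_
    calc ∑ k, (∑ j, A i j * m2 i j v) * (∑ l, B k l * m2 k l v)
        = ∑ k, ∑ j, ∑ l, A i j * B k l * m4 i j k l v := by
          refine Finset.sum_congr rfl fun k _ => ?_
          rw [Finset.sum_mul_sum]
          exact Finset.sum_congr rfl fun j _ => Finset.sum_congr rfl fun l _ => by
            simp only [m4]; ring
      _ = ∑ j, ∑ k, ∑ l, A i j * B k l * m4 i j k l v := Finset.sum_comm
  rw [integral_congr_ae (Filter.Eventually.of_forall hpt),
    integral_finset_sum _ (fun i _ => I4 i)]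
  have expand : ∀ i : Fin d, ∫ v, ∑ j, ∑ k, ∑ l, A i j * B k l * m4 i j k l v ∂σ
      = ∑ j, ∑ k, ∑ l, A i j * B k l * ∫ v, m4 i j k l v ∂σ := by
    intro i
    rw [integral_finset_sum _ fun j _ => I3 i j]
    refine Finset.sum_congr rfl fun j _ => ?_
    rw [integral_finset_sum _ fun k _ => I2 i j k]
    refine Finset.sum_congr rfl fun k _ => ?_
    rw [integral_finset_sum _ fun l _ => I1 i j k l]
    exact Finset.sum_congr rfl fun l _ => integral_const_mul _ _
  rw [Finset.sum_congr rfl fun i _ => expand i]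
  simp only [J_val hσ hd]
  exact sum_eval A B _

lemma qexp_mul_integrable (hσ : IsUniformSphere d σ) (A B : Matrix (Fin d) (Fin d) ℂ) :
    Integrable (fun v => qexp A v * qexp B v) σ := by
  haveI := hσ.1
  refine Integrable.mono' (integrable_const ((∑ i, ∑ j, ‖A i j‖) * (∑ i, ∑ j, ‖B i j‖)))
    ((qexp_cont A).mul (qexp_cont B)).aestronglyMeasurable ?_
  filter_upwards [sphere_mem_ae hσ] with v hv
  rw [norm_mul]
  have hb : ∀ C : Matrix (Fin d) (Fin d) ℂ, ‖qexp C v‖ ≤ ∑ i, ∑ j, ‖C i j‖ := by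
    intro C
    rw [qexp_eq]
    refine (norm_sum_le _ _).trans (Finset.sum_le_sum fun i _ => (norm_sum_le _ _).trans
      (Finset.sum_le_sum fun j _ => ?_))
    rw [norm_mul]
    calc ‖C i j‖ * ‖m2 i j v‖ ≤ ‖C i j‖ * 1 := by
          refine mul_le_mul_of_nonneg_left ?_ (norm_nonneg _)
          simp only [m2, norm_mul, RCLike.norm_conj]
          exact mul_le_one₀ (coord_bd hv i) (norm_nonneg _) (coord_bd hv j)
      _ = ‖C i j‖ := mul_one _
  exact mul_le_mul (hb A) (hb B) (norm_nonneg _) ((norm_nonneg _).trans (hb A))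


/-- For a quantum state `ρ` on `ℂ^d`, the uniform-POVM outcome distribution `D(ρ)` is a
probability measure, and for every Hermitian observable `O`,
`Tr(Oρ) = (d+1)·∫ ⟨v|O|v⟩ dD(ρ)(v) − Tr(O)`; equivalently
`∫ ⟨v|O|v⟩ dD(ρ)(v) = (Tr O + Tr(Oρ))/(d+1)`. -/
theorem uniformPOVMDist_prob_and_mean (d : ℕ) (hd : 0 < d)
    (σ : Measure (Fin d → ℂ)) (hσ : IsUniformSphere d σ)
    (ρ : Matrix (Fin d) (Fin d) ℂ) (hρ : ρ.PosSemidef) (hρtr : ρ.trace = 1)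
    (O : Matrix (Fin d) (Fin d) ℂ) (hO : O.IsHermitian) :
    IsProbabilityMeasure (uniformPOVMDist d σ ρ) ∧
    ((O * ρ).trace.re
      = ((d : ℝ) + 1) * (∫ v, (qexp O v).re ∂(uniformPOVMDist d σ ρ)) - O.trace.re) ∧
    (∫ v, (qexp O v).re ∂(uniformPOVMDist d σ ρ)
      = (O.trace.re + (O * ρ).trace.re) / ((d : ℝ) + 1)) := by
  haveI := hσ.1
  have hdR : (d:ℝ) ≠ 0 := Nat.cast_ne_zero.mpr hd.ne'
  have hd1R : (d:ℝ) + 1 ≠ 0 := by positivity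
  set w : (Fin d → ℂ) → ℝ := fun v => (d : ℝ) * (qexp ρ v).re with hw
  have hw0 : ∀ v, 0 ≤ w v := by
    intro v
    have h0 := (Complex.le_def.mp ((posSemidef_iff_dotProduct_mulVec.mp hρ).2 v)).1
    rw [Complex.zero_re] at h0
    exact mul_nonneg (Nat.cast_nonneg d) h0
  have hw_cont : Continuous w := continuous_const.mul (Complex.continuous_re.comp (qexp_cont ρ))
  have hρre : ∫ v, (qexp ρ v).re ∂σ = 1 / (d:ℝ) := by
    have h1 : ∫ v, (qexp ρ v).re ∂σ = (∫ v, qexp ρ v ∂σ).re := by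
      have := integral_re (μ := σ) (qexp_integrable hσ ρ)
      simpa using this
    rw [h1, qexp_first_moment hσ hd ρ, hρtr]
    have : (1:ℂ) / (d:ℂ) = ((1/(d:ℝ) : ℝ) : ℂ) := by push_cast; ring
    rw [this, Complex.ofReal_re]
  have hwInt : Integrable w σ := ((qexp_integrable hσ ρ).re.const_mul _)
  have hwint_val : ∫ v, w v ∂σ = 1 := by
    rw [hw, integral_const_mul, hρre]
    field_simp
  have hprob : IsProbabilityMeasure (uniformPOVMDist d σ ρ) := by
    constructor
    rw [uniformPOVMDist, withDensity_apply _ MeasurableSet.univ, Measure.restrict_univ,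
      ← ofReal_integral_eq_lintegral_ofReal hwInt (Filter.Eventually.of_forall hw0), hwint_val]
    simp
  have hmeas : Measurable fun v => (w v).toNNReal :=
    measurable_real_toNNReal.comp hw_cont.measurable
  have hD : ∫ v, (qexp O v).re ∂(uniformPOVMDist d σ ρ)
      = ∫ v, ((w v).toNNReal : ℝ) • (qexp O v).re ∂σ := by
    rw [uniformPOVMDist]
    exact integral_withDensity_eq_integral_smul hmeas _
  have hOim : ∀ v, (qexp O v).im = 0 := fun v => Complex.conj_eq_iff_im.mp (qexp_conj hO v)
  have hρim : ∀ v, (qexp ρ v).im = 0 := fun v => Complex.conj_eq_iff_im.mp (qexp_conj hρ.1 v)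
  have hpt : ∀ v, ((w v).toNNReal : ℝ) • (qexp O v).re
      = (d:ℝ) * ((qexp O v) * (qexp ρ v)).re := by
    intro v
    rw [smul_eq_mul, Real.coe_toNNReal _ (hw0 v)]
    simp only [hw, Complex.mul_re, hOim, hρim, mul_zero, zero_mul, sub_zero]
    ring
  have eq2 : ∫ v, (qexp O v).re ∂(uniformPOVMDist d σ ρ)
      = (O.trace.re + (O * ρ).trace.re) / ((d : ℝ) + 1) := by
    rw [hD, integral_congr_ae (Filter.Eventually.of_forall hpt), integral_const_mul]
    have h2 : ∫ v, (qexp O v * qexp ρ v).re ∂σ = (∫ v, qexp O v * qexp ρ v ∂σ).re := by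
      have := integral_re (μ := σ) (qexp_mul_integrable hσ O ρ)
      simpa using this
    rw [h2, qexp_second_moment hσ hd O ρ, hρtr, mul_one]
    have h3 : (O.trace + (O*ρ).trace) / ((d:ℂ)*((d:ℂ)+1))
        = ((((d:ℝ)*((d:ℝ)+1))⁻¹ : ℝ) : ℂ) * (O.trace + (O*ρ).trace) := by
      rw [div_eq_mul_inv, mul_comm]
      congr 1
      push_cast
      ring
    rw [h3, Complex.re_ofReal_mul, Complex.add_re]
    field_simp
  refine ⟨hprob, ?_, eq2⟩
  rw [eq2]
  field_simp
  ring


end
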